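/- Let ρ be a positive semidefinite matrix and let {Π_μ} be a family of mutually orthogonal projections summing to the identity. If for all μ ≠ ν one has Π_μ √ρ Π_ν √ρ Π_μ = 0, then Π_μ √ρ Π_ν = 0 for all μ ≠ ν; consequently √ρ commutes with each Π_μ and hence ρ commutes with each Π_μ. -/

import Mathlib

open Matrix ComplexOrder
open scoped Kronecker

/-- von Neumann entropy `S(ρ) = -∑ λᵢ log λᵢ` via eigenvalues (0 if not Hermitian). -/
noncomputable def vnEntropy {N : Type*} [Fintype N] [DecidableEq N]
    (A : Matrix N N ℂ) : ℝ :=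
  if h : A.IsHermitian then -∑ i, h.eigenvalues i * Real.log (h.eigenvalues i) else 0

/-- Matrix logarithm via the spectral decomposition (with `Real.log 0 = 0` convention). -/
noncomputable def matLog {N : Type*} [Fintype N] [DecidableEq N]
    (A : Matrix N N ℂ) : Matrix N N ℂ :=
  if h : A.IsHermitian then
    (h.eigenvectorUnitary : Matrix N N ℂ) *
      Matrix.diagonal (fun i => (Real.log (h.eigenvalues i) : ℂ)) *
      star (h.eigenvectorUnitary : Matrix N N ℂ)
  else 0

/-- Positive square root via the spectral decomposition. -/
noncomputable def matSqrt {N : Type*} [Fintype N] [DecidableEq N]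
    (A : Matrix N N ℂ) : Matrix N N ℂ :=
  if h : A.IsHermitian then
    (h.eigenvectorUnitary : Matrix N N ℂ) *
      Matrix.diagonal (fun i => (Real.sqrt (h.eigenvalues i) : ℂ)) *
      star (h.eigenvectorUnitary : Matrix N N ℂ)
  else 0

/-- Inverse square root of a positive definite matrix. -/
noncomputable def matInvSqrt {N : Type*} [Fintype N] [DecidableEq N]
    (A : Matrix N N ℂ) : Matrix N N ℂ :=
  matSqrt A⁻¹

/-- Rank-one projection `|b⟩⟨b|`. -/
noncomputable def proj {n : Type*} (b : n → ℂ) : Matrix n n ℂ :=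
  vecMulVec b (star b)

/-- Partial trace over the second (B) tensor factor. -/
noncomputable def ptraceB {m n : Type*} [Fintype n]
    (ρ : Matrix (m × n) (m × n) ℂ) : Matrix m m ℂ :=
  Matrix.of fun i j => ∑ k, ρ (i, k) (j, k)

/-- Partial trace over the first (A) tensor factor. -/
noncomputable def ptraceA {m n : Type*} [Fintype m]
    (ρ : Matrix (m × n) (m × n) ℂ) : Matrix n n ℂ :=
  Matrix.of fun i j => ∑ k, ρ (k, i) (k, j)

/-- The positive semidefinite square root of a positive semidefinite matrix
(as `Matrix.PosSemidef.sqrt` was defined in Mathlib of December 2024). -/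
noncomputable def Matrix.PosSemidef.sqrt {n 𝕜 : Type*} [Fintype n] [RCLike 𝕜] [DecidableEq n]
    {A : Matrix n n 𝕜} (hA : A.PosSemidef) : Matrix n n 𝕜 :=
  hA.isHermitian.eigenvectorUnitary.1 * diagonal ((↑) ∘ (√·) ∘ hA.isHermitian.eigenvalues) *
    (star hA.isHermitian.eigenvectorUnitary : Matrix n n 𝕜)

/-! Since `P A Q A P = (P A Q) (P A Q)ᴴ` for Hermitian `P`, `A` and a Hermitian idempotent `Q`,
the hypothesis kills every off-diagonal block `Π_μ √ρ Π_ν`. A matrix whose off-diagonal blocks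
vanish with respect to a resolution of the identity commutes with each of its projections, and so
does `ρ = √ρ √ρ`. -/

namespace Matrix.PosSemidef

variable {n 𝕜 : Type*} [Fintype n] [RCLike 𝕜] [DecidableEq n] {A : Matrix n n 𝕜}

theorem isHermitian_sqrt (hA : A.PosSemidef) : hA.sqrt.IsHermitian :=
  isHermitian_mul_mul_conjTranspose _ <| isHermitian_diagonal_of_self_adjoint _ <| by
    ext i; simp

theorem sqrt_mul_self (hA : A.PosSemidef) : hA.sqrt * hA.sqrt = A := by
  have hsqrt : hA.sqrt = Unitary.conjStarAlgAut 𝕜 (Matrix n n 𝕜) hA.isHermitian.eigenvectorUnitary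
      (diagonal (RCLike.ofReal ∘ (√·) ∘ hA.isHermitian.eigenvalues)) := rfl
  conv_rhs => rw [hA.isHermitian.spectral_theorem]
  rw [hsqrt, ← map_mul, diagonal_mul_diagonal]
  congr 2
  ext i
  simp [← RCLike.ofReal_mul, Real.mul_self_sqrt (hA.eigenvalues_nonneg i)]

end Matrix.PosSemidef

theorem Matrix.mul_mul_eq_zero_of_mul_mul_mul_mul_eq_zero {n R : Type*} [Fintype n]
    [PartialOrder R] [CommRing R] [StarRing R] [StarOrderedRing R] [NoZeroDivisors R]
    {P Q A : Matrix n n R} (hP : P.IsHermitian) (hQ : Q.IsHermitian) (hQQ : Q * Q = Q)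
    (hA : A.IsHermitian) (h : P * A * Q * A * P = 0) : P * A * Q = 0 := by
  refine self_mul_conjTranspose_eq_zero.mp ?_
  calc P * A * Q * (P * A * Q)ᴴ = P * A * (Q * Q) * A * P := by
        simp only [conjTranspose_mul, hP.eq, hQ.eq, hA.eq, Matrix.mul_assoc]
    _ = 0 := by rw [hQQ, h]

theorem commute_of_sum_eq_one_of_mul_mul_eq_zero {R ι : Type*} [Semiring R] [Fintype ι]
    {P : ι → R} (hsum : ∑ μ, P μ = 1) {a : R} (hoff : ∀ μ ν, μ ≠ ν → P μ * a * P ν = 0)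
    (μ : ι) : Commute a (P μ) := by
  have hright : a * P μ = P μ * a * P μ := by
    calc a * P μ = (∑ ν, P ν) * a * P μ := by rw [hsum, one_mul]
      _ = P μ * a * P μ := by
        rw [Finset.sum_mul, Finset.sum_mul,
          Finset.sum_eq_single_of_mem μ (Finset.mem_univ μ) fun ν _ hne => hoff ν μ hne]
  have hleft : P μ * a = P μ * a * P μ := by
    calc P μ * a = P μ * a * ∑ ν, P ν := by rw [hsum, mul_one]
      _ = P μ * a * P μ := by
        rw [Finset.mul_sum,
          Finset.sum_eq_single_of_mem μ (Finset.mem_univ μ) fun ν _ hne => hoff μ ν hne.symm]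
  exact hright.trans hleft.symm

theorem stmt0_general {N : ℕ} {ι : Type*} [Fintype ι]
    (ρ : Matrix (Fin N) (Fin N) ℂ) (hρ : ρ.PosSemidef)
    (P : ι → Matrix (Fin N) (Fin N) ℂ)
    (hherm : ∀ μ, (P μ).IsHermitian)
    (hidem : ∀ μ, P μ * P μ = P μ)
    (hsum : ∑ μ, P μ = 1)
    (h : ∀ μ ν, μ ≠ ν → P μ * hρ.sqrt * P ν * hρ.sqrt * P μ = 0) :
    (∀ μ ν, μ ≠ ν → P μ * hρ.sqrt * P ν = 0) ∧
    (∀ μ, Commute hρ.sqrt (P μ)) ∧ (∀ μ, Commute ρ (P μ)) := by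
  have hoff : ∀ μ ν, μ ≠ ν → P μ * hρ.sqrt * P ν = 0 := fun μ ν hne =>
    mul_mul_eq_zero_of_mul_mul_mul_mul_eq_zero (hherm μ) (hherm ν) (hidem ν)
      hρ.isHermitian_sqrt (h μ ν hne)
  have hcomm : ∀ μ, Commute hρ.sqrt (P μ) := commute_of_sum_eq_one_of_mul_mul_eq_zero hsum hoff
  refine ⟨hoff, hcomm, fun μ => ?_⟩
  rw [← hρ.sqrt_mul_self]
  exact (hcomm μ).mul_left (hcomm μ)

theorem stmt0 {N : ℕ} {ι : Type*} [Fintype ι]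
    (ρ : Matrix (Fin N) (Fin N) ℂ) (hρ : ρ.PosSemidef)
    (P : ι → Matrix (Fin N) (Fin N) ℂ)
    (hherm : ∀ μ, (P μ).IsHermitian)
    (hidem : ∀ μ, P μ * P μ = P μ)
    (horth : ∀ μ ν, μ ≠ ν → P μ * P ν = 0)
    (hsum : ∑ μ, P μ = 1)
    (h : ∀ μ ν, μ ≠ ν → P μ * hρ.sqrt * P ν * hρ.sqrt * P μ = 0) :
    (∀ μ ν, μ ≠ ν → P μ * hρ.sqrt * P ν = 0) ∧
    (∀ μ, Commute hρ.sqrt (P μ)) ∧ (∀ μ, Commute ρ (P μ)) :=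
  stmt0_general ρ hρ P hherm hidem hsum h
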